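/- arXiv:2408.02705 — 3 statements merged into one kernel-verified Lean document; each statement's English description precedes it below -/
import Mathlib

section
/- Let G be an undirected graph on n ≥ 1 vertices with transition matrix P = D^{-1}A, decay factor α ∈ (0,1), and truncation order T ≥ 1. Then the truncation error between the exact PPR matrix Π = Σ_{r=0}^∞ α(1−α)^r P^r and the T-truncated PPR matrix Π' = Σ_{r=0}^T α(1−α)^r P^r satisfies ‖Π − Π'‖_F ≤ √n·(1−α)^{T+1}. -/
/-!
The transition matrix `P = D⁻¹A` is row stochastic, hence so is every power `P ^ r`.
The truncation error `Π - Π' = ∑_{r > T} α(1-α)^r P^r` is therefore an entrywise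
nonnegative matrix whose rows all sum to `∑_{r > T} α(1-α)^r = (1-α)^{T+1}`. A nonnegative
row summing to `s` has squared Euclidean norm at most `s²`, so summing over the `n` rows
gives `‖Π - Π'‖_F² ≤ n s²`.
-/

open Matrix Finset

namespace Matrix

theorem sum_sum_sq_le_of_nonneg_of_sum_row_eq {m n : Type*} [Fintype m] [Fintype n]
    {M : Matrix m n ℝ} {s : ℝ} (hM : ∀ i j, 0 ≤ M i j) (hrow : ∀ i, ∑ j, M i j = s) :
    ∑ i, ∑ j, M i j ^ 2 ≤ Fintype.card m * s ^ 2 :=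
  calc ∑ i, ∑ j, M i j ^ 2
      ≤ ∑ _i : m, s ^ 2 :=
        sum_le_sum fun i _ => hrow i ▸ sum_sq_le_sq_sum_of_nonneg fun j _ => hM i j
    _ = Fintype.card m * s ^ 2 := by simp

variable {n : Type*} [Fintype n] [DecidableEq n]

theorem diagonal_inv_sum_row_mul_mem_rowStochastic {A : Matrix n n ℝ} (hA : ∀ i j, 0 ≤ A i j)
    (hdeg : ∀ i, 0 < ∑ j, A i j) :
    diagonal (fun i => (∑ j, A i j)⁻¹) * A ∈ rowStochastic ℝ n := by
  refine mem_rowStochastic_iff_sum.2 ⟨fun i j => ?_, fun i => ?_⟩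
  · rw [diagonal_mul]
    exact mul_nonneg (inv_nonneg.2 (hdeg i).le) (hA i j)
  · simp only [diagonal_mul, ← mul_sum]
    exact inv_mul_cancel₀ (hdeg i).ne'

section WeightedSeries

variable {w : ℕ → ℝ} {Q : ℕ → Matrix n n ℝ}

theorem summable_mul_apply_of_mem_rowStochastic (hw0 : ∀ r, 0 ≤ w r) (hw : Summable w)
    (hQ : ∀ r, Q r ∈ rowStochastic ℝ n) (i j : n) :
    Summable fun r => w r * Q r i j :=
  hw.of_nonneg_of_le (fun r => mul_nonneg (hw0 r) (nonneg_of_mem_rowStochastic (hQ r)))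
    fun r => mul_le_of_le_one_right (hw0 r) (le_one_of_mem_rowStochastic (hQ r))

theorem summable_smul_of_mem_rowStochastic (hw0 : ∀ r, 0 ≤ w r) (hw : Summable w)
    (hQ : ∀ r, Q r ∈ rowStochastic ℝ n) : Summable fun r => w r • Q r :=
  Pi.summable.2 fun i => Pi.summable.2 fun j =>
    summable_mul_apply_of_mem_rowStochastic hw0 hw hQ i j

theorem tsum_smul_apply_of_mem_rowStochastic (hw0 : ∀ r, 0 ≤ w r) (hw : Summable w)
    (hQ : ∀ r, Q r ∈ rowStochastic ℝ n) (i j : n) :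
    (∑' r, w r • Q r) i j = ∑' r, w r * Q r i j := by
  have h := summable_smul_of_mem_rowStochastic hw0 hw hQ
  exact (congrFun (tsum_apply h) j).trans (tsum_apply (Pi.summable.1 h i))

theorem tsum_smul_apply_nonneg_of_mem_rowStochastic (hw0 : ∀ r, 0 ≤ w r) (hw : Summable w)
    (hQ : ∀ r, Q r ∈ rowStochastic ℝ n) (i j : n) :
    0 ≤ (∑' r, w r • Q r) i j := by
  rw [tsum_smul_apply_of_mem_rowStochastic hw0 hw hQ]
  exact tsum_nonneg fun r => mul_nonneg (hw0 r) (nonneg_of_mem_rowStochastic (hQ r))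

theorem sum_row_tsum_smul_of_mem_rowStochastic (hw0 : ∀ r, 0 ≤ w r) (hw : Summable w)
    (hQ : ∀ r, Q r ∈ rowStochastic ℝ n) (i : n) :
    ∑ j, (∑' r, w r • Q r) i j = ∑' r, w r := by
  simp_rw [tsum_smul_apply_of_mem_rowStochastic hw0 hw hQ]
  rw [← Summable.tsum_finsetSum fun j _ => summable_mul_apply_of_mem_rowStochastic hw0 hw hQ i j]
  simp_rw [← mul_sum, sum_row_of_mem_rowStochastic (hQ _) i, mul_one]

end WeightedSeries

end Matrix

theorem tsum_mul_one_sub_pow_add {α : ℝ} (hα0 : 0 < α) (hα1 : α < 1) (k : ℕ) :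
    ∑' r, α * (1 - α) ^ (r + k) = (1 - α) ^ k := by
  have hgeo : ∑' r : ℕ, (1 - α) ^ r = α⁻¹ := by
    rw [tsum_geometric_of_lt_one (by linarith) (by linarith), sub_sub_cancel]
  calc ∑' r, α * (1 - α) ^ (r + k)
      = ∑' r, α * (1 - α) ^ k * (1 - α) ^ r := tsum_congr fun r => by ring
    _ = (1 - α) ^ k := by
      rw [tsum_mul_left, hgeo, mul_right_comm, mul_inv_cancel₀ hα0.ne', one_mul]

theorem ppr_truncation_error_frobenius_general
    {n : ℕ}
    (A : Matrix (Fin n) (Fin n) ℝ)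
    (hAnn : ∀ i j, 0 ≤ A i j)
    (d : Fin n → ℝ) (hd : ∀ i, d i = ∑ j, A i j) (hdpos : ∀ i, 0 < d i)
    (Dinv P : Matrix (Fin n) (Fin n) ℝ)
    (hDinv : Dinv = Matrix.diagonal fun i => (d i)⁻¹)
    (hP : P = Dinv * A)
    (α : ℝ) (hα0 : 0 < α) (hα1 : α < 1)
    (T : ℕ)
    (PPR PPRtrunc : Matrix (Fin n) (Fin n) ℝ)
    (hPPR : PPR = ∑' r : ℕ, (α * (1 - α) ^ r) • P ^ r)
    (hPPRtrunc : PPRtrunc = ∑ r ∈ Finset.range (T + 1), (α * (1 - α) ^ r) • P ^ r) :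
    Real.sqrt (∑ i, ∑ j, ((PPR - PPRtrunc) i j) ^ 2)
      ≤ Real.sqrt n * (1 - α) ^ (T + 1) := by
  set w : ℕ → ℝ := fun r => α * (1 - α) ^ r
  have hw0 : ∀ r, 0 ≤ w r := fun r => mul_nonneg hα0.le (pow_nonneg (by linarith) r)
  have hw : Summable w := (summable_geometric_of_lt_one (by linarith) (by linarith)).mul_left α
  have hPs : P ∈ rowStochastic ℝ (Fin n) := by
    obtain rfl : d = fun i => ∑ j, A i j := funext hd
    exact hP ▸ hDinv ▸ diagonal_inv_sum_row_mul_mem_rowStochastic hAnn hdpos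
  have hQ : ∀ r, P ^ (r + (T + 1)) ∈ rowStochastic ℝ (Fin n) := fun r => pow_mem hPs _
  have hw' : Summable fun r => w (r + (T + 1)) := (summable_nat_add_iff _).2 hw
  have htail : PPR - PPRtrunc = ∑' r, w (r + (T + 1)) • P ^ (r + (T + 1)) := by
    have hseries := summable_smul_of_mem_rowStochastic hw0 hw (pow_mem hPs)
    rw [hPPR, hPPRtrunc, ← hseries.sum_add_tsum_nat_add (T + 1), add_sub_cancel_left]
  have hrow : ∀ i, ∑ j, (PPR - PPRtrunc) i j = (1 - α) ^ (T + 1) := fun i => by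
    rw [htail, sum_row_tsum_smul_of_mem_rowStochastic (fun r => hw0 _) hw' hQ,
      tsum_mul_one_sub_pow_add hα0 hα1]
  have hnonneg : ∀ i j, 0 ≤ (PPR - PPRtrunc) i j :=
    htail ▸ tsum_smul_apply_nonneg_of_mem_rowStochastic (fun r => hw0 _) hw' hQ
  calc √(∑ i, ∑ j, ((PPR - PPRtrunc) i j) ^ 2)
      ≤ √(n * ((1 - α) ^ (T + 1)) ^ 2) := Real.sqrt_le_sqrt
        (by simpa using sum_sum_sq_le_of_nonneg_of_sum_row_eq hnonneg hrow)
    _ = √n * (1 - α) ^ (T + 1) := by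
      rw [Real.sqrt_mul n.cast_nonneg, Real.sqrt_sq (pow_nonneg (by linarith) _)]

/-- The truncation error between the exact PPR matrix
`Π = Σ_{r=0}^∞ α(1−α)^r P^r` and the T-truncated PPR matrix
`Π' = Σ_{r=0}^T α(1−α)^r P^r` satisfies `‖Π − Π'‖_F ≤ √n·(1−α)^{T+1}`. -/
theorem ppr_truncation_error_frobenius
    {n : ℕ} (hn : 1 ≤ n)
    (A : Matrix (Fin n) (Fin n) ℝ)
    (hA : A.IsSymm) (hAnn : ∀ i j, 0 ≤ A i j)
    (d : Fin n → ℝ) (hd : ∀ i, d i = ∑ j, A i j) (hdpos : ∀ i, 0 < d i)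
    (Dinv P : Matrix (Fin n) (Fin n) ℝ)
    (hDinv : Dinv = Matrix.diagonal fun i => (d i)⁻¹)
    (hP : P = Dinv * A)
    (α : ℝ) (hα0 : 0 < α) (hα1 : α < 1)
    (T : ℕ) (hT : 1 ≤ T)
    (PPR PPRtrunc : Matrix (Fin n) (Fin n) ℝ)
    (hPPR : PPR = ∑' r : ℕ, (α * (1 - α) ^ r) • P ^ r)
    (hPPRtrunc : PPRtrunc = ∑ r ∈ Finset.range (T + 1), (α * (1 - α) ^ r) • P ^ r) :
    Real.sqrt (∑ i, ∑ j, ((PPR - PPRtrunc) i j) ^ 2)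
      ≤ Real.sqrt n * (1 - α) ^ (T + 1) :=
  ppr_truncation_error_frobenius_general A hAnn d hd hdpos Dinv P hDinv hP α hα0 hα1 T PPR PPRtrunc
    hPPR hPPRtrunc
end

section
/- Let B and B̃ be symmetric n×n real matrices such that B is positive semidefinite with all eigenvalues strictly less than 2, and let 0 < ε ≤ 1/2. If (1−ε)·x^⊤B̃x ≤ x^⊤Bx ≤ (1+ε)·x^⊤B̃x holds for all x ∈ ℝ^n, then every eigenvalue of the symmetric matrix B̃ − B has absolute value strictly less than 4ε. -/
/-!
If `v ≠ 0` is an eigenvector of `B̃ - B` for `μ`, then `μ ‖v‖² = vᵀB̃v - vᵀBv`. The sparsifier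
inequalities with `ε ≤ 1/2` give `|vᵀB̃v - vᵀBv| ≤ 2ε vᵀBv`, and the spectral bound on `B` gives
`vᵀBv < 2 ‖v‖²`.
-/

open Matrix
open scoped ComplexOrder

theorem Matrix.exists_mulVec_eq_smul_of_mem_spectrum {K n : Type*} [Field K] [Fintype n]
    [DecidableEq n] {A : Matrix n n K} {μ : K} (h : μ ∈ spectrum K A) :
    ∃ v, v ≠ 0 ∧ A *ᵥ v = μ • v := by
  rw [← Matrix.spectrum_toLin', ← Module.End.hasEigenvalue_iff_mem_spectrum] at h
  obtain ⟨v, hv⟩ := h.exists_hasEigenvector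
  exact ⟨v, hv.2, hv.apply_eq_smul⟩

theorem Matrix.IsHermitian.posDef_of_spectrum_pos {𝕜 n : Type*} [RCLike 𝕜] [Fintype n]
    [DecidableEq n] {A : Matrix n n 𝕜} (hA : A.IsHermitian) (h : ∀ μ ∈ spectrum ℝ A, 0 < μ) :
    A.PosDef :=
  hA.posDef_iff_eigenvalues_pos.mpr fun i ↦ h _ (hA.eigenvalues_mem_spectrum_real i)

theorem Matrix.IsHermitian.dotProduct_mulVec_lt_of_spectrum_lt {n : Type*} [Fintype n]
    [DecidableEq n] {A : Matrix n n ℝ} (hA : A.IsHermitian) {c : ℝ}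
    (h : ∀ μ ∈ spectrum ℝ A, μ < c) {x : n → ℝ} (hx : x ≠ 0) :
    x ⬝ᵥ A *ᵥ x < c * (x ⬝ᵥ x) := by
  have hC : (algebraMap ℝ (Matrix n n ℝ) c - A).PosDef := by
    refine ((isHermitian_iff_isSelfAdjoint.mpr (.algebraMap _ (.all c))).sub hA)
      |>.posDef_of_spectrum_pos fun μ hμ ↦ ?_
    rw [← spectrum.singleton_sub_eq] at hμ
    obtain ⟨_, rfl, ν, hν, rfl⟩ := hμ
    exact sub_pos.mpr (h ν hν)
  simpa [sub_mulVec, Algebra.algebraMap_eq_smul_one, dotProduct_sub, smul_mulVec]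
    using hC.dotProduct_mulVec_pos hx

theorem abs_sub_le_of_mul_le_of_le_mul {q b ε : ℝ} (hε0 : 0 < ε) (hε : ε ≤ 1 / 2)
    (hlow : (1 - ε) * q ≤ b) (hup : b ≤ (1 + ε) * q) : |q - b| ≤ 2 * ε * b := by
  have hq : 0 ≤ q := by nlinarith
  rw [abs_le]
  constructor <;> nlinarith

theorem sparsifier_eigenvalue_bound_general
    {n : ℕ} (B Bt : Matrix (Fin n) (Fin n) ℝ)
    (hBpsd : B.PosSemidef)
    (heig : ∀ μ ∈ spectrum ℝ B, μ < 2)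
    (ε : ℝ) (hε0 : 0 < ε) (hε : ε ≤ 1 / 2)
    (hsparse : ∀ x : Fin n → ℝ,
      (1 - ε) * (x ⬝ᵥ Bt.mulVec x) ≤ x ⬝ᵥ B.mulVec x ∧
      x ⬝ᵥ B.mulVec x ≤ (1 + ε) * (x ⬝ᵥ Bt.mulVec x)) :
    ∀ μ ∈ spectrum ℝ (Bt - B), |μ| < 4 * ε := by
  intro μ hμ
  obtain ⟨v, hv, hμv⟩ := exists_mulVec_eq_smul_of_mem_spectrum hμ
  have hvv : 0 < v ⬝ᵥ v := by simpa using dotProduct_star_self_pos_iff.mpr hv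
  have hrayleigh : μ * (v ⬝ᵥ v) = v ⬝ᵥ Bt *ᵥ v - v ⬝ᵥ B *ᵥ v := by
    rw [← smul_eq_mul, ← dotProduct_smul, ← hμv, sub_mulVec, dotProduct_sub]
  have hB2 := hBpsd.isHermitian.dotProduct_mulVec_lt_of_spectrum_lt heig hv
  have hclose := abs_sub_le_of_mul_le_of_le_mul hε0 hε (hsparse v).1 (hsparse v).2
  refine lt_of_mul_lt_mul_right ?_ hvv.le
  calc |μ| * (v ⬝ᵥ v) = |v ⬝ᵥ Bt *ᵥ v - v ⬝ᵥ B *ᵥ v| := by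
        rw [← hrayleigh, abs_mul, abs_of_pos hvv]
    _ ≤ 2 * ε * (v ⬝ᵥ B *ᵥ v) := hclose
    _ < 4 * ε * (v ⬝ᵥ v) := by nlinarith

/-- Lemma A1: If `B` is symmetric PSD with all eigenvalues `< 2` and `B̃` is a
symmetric ε-spectral sparsifier of `B` with `0 < ε ≤ 1/2`, then every eigenvalue of `B̃ − B`
has absolute value `< 4ε`. -/
theorem sparsifier_eigenvalue_bound
    {n : ℕ} (B Bt : Matrix (Fin n) (Fin n) ℝ)
    (hB : B.IsSymm) (hBt : Bt.IsSymm) (hBpsd : B.PosSemidef)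
    (heig : ∀ μ ∈ spectrum ℝ B, μ < 2)
    (ε : ℝ) (hε0 : 0 < ε) (hε : ε ≤ 1 / 2)
    (hsparse : ∀ x : Fin n → ℝ,
      (1 - ε) * (x ⬝ᵥ Bt.mulVec x) ≤ x ⬝ᵥ B.mulVec x ∧
      x ⬝ᵥ B.mulVec x ≤ (1 + ε) * (x ⬝ᵥ Bt.mulVec x)) :
    ∀ μ ∈ spectrum ℝ (Bt - B), |μ| < 4 * ε :=
  sparsifier_eigenvalue_bound_general B Bt hBpsd heig ε hε0 hε hsparse
end

section
/- Let G be an undirected graph on n ≥ 1 vertices with transition matrix P = D^{-1}A, decay factor α ∈ (0,1), truncation order T ≥ 1, α_sum = Σ_{i=1}^T α(1−α)^i, and β_r = α(1−α)^r/α_sum. Let L̃ be a symmetric positive semidefinite ε-spectral sparsifier of L_β(G) with 0 < ε ≤ 1/2, and set Π̃ = αI + α_sum·(I − D^{-1}L̃). Then every eigenvalue of the matrix Π' − Π̃, where Π' = Σ_{r=0}^T α(1−α)^r P^r, has absolute value at most 4ε·α_sum. -/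
/-!
With `D = diag d`, the identity `Π' − Π̃ = α_sum • D⁻¹ (L̃ − L_β)` turns an eigenpair `(μ, v)` of
`Π' − Π̃` into `μ · vᵀDv = α_sum · vᵀ(L̃ − L_β)v`, with `vᵀDv > 0`. Each `D Pʳ` is entrywise
nonnegative and all its row and column sums are `d` (`P 1 = 1`, and `dᵀP = dᵀ` because `A` is
symmetric), hence `|vᵀ D Pʳ v| ≤ vᵀDv`; the `β_r` being convex weights, `0 ≤ vᵀL_βv ≤ 2 vᵀDv`.
The sparsifier inequalities then give `|vᵀ(L̃ − L_β)v| ≤ 2ε vᵀL_βv ≤ 4ε vᵀDv`.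
-/

open Matrix Finset

variable {ι : Type*} [Fintype ι]

theorem Matrix.pow_mulVec_eq_self {R : Type*} [Semiring R] [DecidableEq ι] {M : Matrix ι ι R}
    {v : ι → R} (h : M *ᵥ v = v) (r : ℕ) : M ^ r *ᵥ v = v := by
  induction r with
  | zero => simp
  | succ r ih => rw [pow_succ, ← mulVec_mulVec, h, ih]

theorem Matrix.vecMul_pow_eq_self {R : Type*} [Semiring R] [DecidableEq ι] {M : Matrix ι ι R}
    {v : ι → R} (h : v ᵥ* M = v) (r : ℕ) : v ᵥ* M ^ r = v := by
  induction r with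
  | zero => simp
  | succ r ih => rw [pow_succ, ← vecMul_vecMul, ih, h]

theorem diagonal_inv_mul_diagonal {R : Type*} [DivisionSemiring R] [DecidableEq ι] {d : ι → R} (hd : ∀ i, d i ≠ 0) :
    diagonal d⁻¹ * diagonal d = 1 := by
  rw [diagonal_mul_diagonal, ← diagonal_one]
  exact congrArg diagonal (funext fun i => inv_mul_cancel₀ (hd i))

theorem diagonal_mul_diagonal_inv {R : Type*} [DivisionSemiring R] [DecidableEq ι] {d : ι → R} (hd : ∀ i, d i ≠ 0) :
    diagonal d * diagonal d⁻¹ = 1 := by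
  rw [diagonal_mul_diagonal, ← diagonal_one]
  exact congrArg diagonal (funext fun i => mul_inv_cancel₀ (hd i))

theorem exists_dotProduct_mulVec_eq_of_mem_spectrum {K : Type*} [Field K] [DecidableEq ι]
    {D Dinv B : Matrix ι ι K} (hDDinv : D * Dinv = 1) {c μ : K}
    (hμ : μ ∈ spectrum K (c • (Dinv * B))) :
    ∃ v ≠ 0, c * (v ⬝ᵥ B *ᵥ v) = μ * (v ⬝ᵥ D *ᵥ v) := by
  rw [← spectrum_toLin', ← Module.End.hasEigenvalue_iff_mem_spectrum] at hμ
  obtain ⟨v, hv⟩ := hμ.exists_hasEigenvector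
  refine ⟨v, hv.2, ?_⟩
  have hBv : c • B *ᵥ v = μ • D *ᵥ v := by
    have := congrArg (D *ᵥ ·) hv.apply_eq_smul
    simpa [toLin'_apply, mulVec_smul, mulVec_mulVec, ← mul_assoc, hDDinv] using this
  rw [← smul_eq_mul, ← smul_eq_mul, ← dotProduct_smul, ← dotProduct_smul, hBv]

theorem abs_dotProduct_mulVec_le_of_nonneg [DecidableEq ι] {M : Matrix ι ι ℝ} {s : ι → ℝ}
    (hM : ∀ i j, 0 ≤ M i j) (hrow : M *ᵥ 1 = s) (hcol : 1 ᵥ* M = s) (x : ι → ℝ) :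
    |x ⬝ᵥ M *ᵥ x| ≤ x ⬝ᵥ diagonal s *ᵥ x := by
  have hrow' (i : ι) : ∑ j, M i j = s i := by simpa [mulVec, dotProduct] using congrFun hrow i
  have hcol' (j : ι) : ∑ i, M i j = s j := by simpa [vecMul, dotProduct] using congrFun hcol j
  have sq_expand (c : ℝ) (hc : c ^ 2 = 1) :
      ∑ i, ∑ j, M i j * (x i + c * x j) ^ 2
        = 2 * (x ⬝ᵥ diagonal s *ᵥ x + c * (x ⬝ᵥ M *ᵥ x)) := by
    have e (i j : ι) : M i j * (x i + c * x j) ^ 2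
        = M i j * x i ^ 2 + 2 * c * (x i * (M i j * x j)) + M i j * x j ^ 2 := by
      linear_combination (M i j * x j ^ 2) * hc
    simp only [e, sum_add_distrib, ← sum_mul, hrow', ← mul_sum]
    rw [sum_comm (f := fun i j => M i j * x j ^ 2)]
    have hdiag : x ⬝ᵥ diagonal s *ᵥ x = ∑ i, s i * x i ^ 2 := by
      simp only [dotProduct, mulVec_diagonal]
      exact sum_congr rfl fun i _ => by ring
    rw [hdiag]
    simp only [← sum_mul, hcol', dotProduct, mulVec]
    ring
  have hnonneg (c : ℝ) (hc : c ^ 2 = 1) : 0 ≤ x ⬝ᵥ diagonal s *ᵥ x + c * (x ⬝ᵥ M *ᵥ x) := by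
    have := sum_nonneg fun i (_ : i ∈ univ) =>
      sum_nonneg fun j (_ : j ∈ univ) => mul_nonneg (hM i j) (sq_nonneg (x i + c * x j))
    linarith [sq_expand c hc]
  rw [abs_le]
  constructor <;> linarith [hnonneg 1 (by norm_num), hnonneg (-1) (by norm_num)]

theorem abs_dotProduct_sum_smul_mulVec_le {κ : Type*} {s : Finset κ} {β : κ → ℝ}
    {M : κ → Matrix ι ι ℝ} {x : ι → ℝ} {c : ℝ} (hβ0 : ∀ r ∈ s, 0 ≤ β r)
    (hβ1 : ∑ r ∈ s, β r = 1) (hM : ∀ r ∈ s, |x ⬝ᵥ M r *ᵥ x| ≤ c) :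
    |x ⬝ᵥ (∑ r ∈ s, β r • M r) *ᵥ x| ≤ c := by
  rw [sum_mulVec, dotProduct_sum]
  simp only [smul_mulVec, dotProduct_smul, smul_eq_mul]
  calc |∑ r ∈ s, β r * (x ⬝ᵥ M r *ᵥ x)| ≤ ∑ r ∈ s, β r * c := by
        refine (abs_sum_le_sum_abs _ _).trans (sum_le_sum fun r hr => ?_)
        rw [abs_mul, abs_of_nonneg (hβ0 r hr)]
        exact mul_le_mul_of_nonneg_left (hM r hr) (hβ0 r hr)
    _ = c := by rw [← sum_mul, hβ1, one_mul]

section RandomWalk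

variable [DecidableEq ι] {A : Matrix ι ι ℝ} {d : ι → ℝ}

theorem randomWalk_mulVec_one (hd : A *ᵥ 1 = d) (hd0 : ∀ i, d i ≠ 0) :
    (diagonal d⁻¹ * A) *ᵥ 1 = 1 := by
  ext i
  rw [← mulVec_mulVec, hd, mulVec_diagonal, Pi.inv_apply, Pi.one_apply, inv_mul_cancel₀ (hd0 i)]

theorem vecMul_randomWalk (hA : A.IsSymm) (hd : A *ᵥ 1 = d) (hd0 : ∀ i, d i ≠ 0) :
    d ᵥ* (diagonal d⁻¹ * A) = d := by
  have hd_inv : d ᵥ* diagonal d⁻¹ = 1 := by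
    ext i
    rw [vecMul_diagonal, Pi.inv_apply, Pi.one_apply, mul_inv_cancel₀ (hd0 i)]
  rw [← vecMul_vecMul, hd_inv, ← mulVec_transpose, hA.eq, hd]

theorem abs_dotProduct_diagonal_mul_randomWalk_pow_mulVec_le (hA : A.IsSymm)
    (hAnn : ∀ i j, 0 ≤ A i j) (hd : A *ᵥ 1 = d) (hdpos : ∀ i, 0 < d i) (r : ℕ) (x : ι → ℝ) :
    |x ⬝ᵥ (diagonal d * (diagonal d⁻¹ * A) ^ r) *ᵥ x| ≤ x ⬝ᵥ diagonal d *ᵥ x := by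
  have hd0 (i : ι) : d i ≠ 0 := (hdpos i).ne'
  have hPnn (i j : ι) : 0 ≤ (diagonal d⁻¹ * A) i j := by
    rw [diagonal_mul]
    exact mul_nonneg (inv_nonneg.2 (hdpos i).le) (hAnn i j)
  refine abs_dotProduct_mulVec_le_of_nonneg (fun i j => ?_) ?_ ?_ x
  · rw [diagonal_mul]
    exact mul_nonneg (hdpos i).le (pow_apply_nonneg hPnn r i j)
  · rw [← mulVec_mulVec, pow_mulVec_eq_self (randomWalk_mulVec_one hd hd0)]
    ext i
    simp [mulVec_diagonal]
  · have hone : (1 : ι → ℝ) ᵥ* diagonal d = d := by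
      ext i
      simp [vecMul_diagonal]
    rw [← vecMul_vecMul, hone, vecMul_pow_eq_self (vecMul_randomWalk hA hd hd0)]

theorem dotProduct_pprLaplacian_mulVec_mem_Icc (hA : A.IsSymm) (hAnn : ∀ i j, 0 ≤ A i j) (hd : A *ᵥ 1 = d) (hdpos : ∀ i, 0 < d i)
    {s : Finset ℕ} {β : ℕ → ℝ} (hβ0 : ∀ r ∈ s, 0 ≤ β r) (hβ1 : ∑ r ∈ s, β r = 1) (x : ι → ℝ) :
    x ⬝ᵥ (diagonal d - ∑ r ∈ s, β r • (diagonal d * (diagonal d⁻¹ * A) ^ r)) *ᵥ x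
      ∈ Set.Icc 0 (2 * (x ⬝ᵥ diagonal d *ᵥ x)) := by
  have h := abs_dotProduct_sum_smul_mulVec_le hβ0 hβ1 fun r _ =>
    abs_dotProduct_diagonal_mul_randomWalk_pow_mulVec_le hA hAnn hd hdpos r x
  obtain ⟨hlo, hhi⟩ := abs_le.1 h
  rw [sub_mulVec, dotProduct_sub]
  constructor <;> linarith

end RandomWalk

theorem abs_sub_le_of_spectral_approx {a b ε : ℝ} (hb : 0 ≤ b) (hε0 : 0 ≤ ε) (hε : ε ≤ 1 / 2)
    (hlo : (1 - ε) * a ≤ b) (hhi : b ≤ (1 + ε) * a) : |a - b| ≤ 2 * ε * b := by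
  have ha : 0 ≤ a := by nlinarith
  rw [abs_le]
  constructor <;> nlinarith

theorem truncPPR_sub_approxPPR [DecidableEq ι] {Dinv D P L : Matrix ι ι ℝ}
    (hDinvD : Dinv * D = 1) {α αsum : ℝ} (hαsum : αsum ≠ 0) (T : ℕ) :
    ∑ r ∈ range (T + 1), (α * (1 - α) ^ r) • P ^ r - (α • 1 + αsum • (1 - Dinv * L))
      = αsum • (Dinv * (L - (D - ∑ r ∈ Icc 1 T, (α * (1 - α) ^ r / αsum) • (D * P ^ r)))) := by
  have hsplit : ∑ r ∈ range (T + 1), (α * (1 - α) ^ r) • P ^ r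
      = α • 1 + ∑ r ∈ Icc 1 T, (α * (1 - α) ^ r) • P ^ r := by
    rw [range_eq_Ico, sum_eq_sum_Ico_succ_bot (by omega), Ico_add_one_right_eq_Icc]
    simp
  have hlap : Dinv * (D - ∑ r ∈ Icc 1 T, (α * (1 - α) ^ r / αsum) • (D * P ^ r))
      = 1 - ∑ r ∈ Icc 1 T, (α * (1 - α) ^ r / αsum) • P ^ r := by
    simp_rw [mul_sub, hDinvD, mul_sum, Matrix.mul_smul, ← mul_assoc, hDinvD, one_mul]
  rw [mul_sub, hlap, hsplit, smul_sub, smul_sub, smul_sub, smul_sum]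
  simp_rw [smul_smul, mul_div_cancel₀ _ hαsum]
  abel

theorem approx_ppr_eigenvalue_bound_general
    {n : ℕ}
    (A : Matrix (Fin n) (Fin n) ℝ)
    (hA : A.IsSymm) (hAnn : ∀ i j, 0 ≤ A i j)
    (d : Fin n → ℝ) (hd : ∀ i, d i = ∑ j, A i j) (hdpos : ∀ i, 0 < d i)
    (α : ℝ) (hα0 : 0 < α) (hα1 : α < 1)
    (T : ℕ) (hT : 1 ≤ T)
    (αsum : ℝ) (hαsum : αsum = ∑ i ∈ Finset.Icc 1 T, α * (1 - α) ^ i)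
    (β : ℕ → ℝ) (hβ : ∀ r, β r = α * (1 - α) ^ r / αsum)
    (D Dinv P Lβ : Matrix (Fin n) (Fin n) ℝ)
    (hD : D = Matrix.diagonal d)
    (hDinv : Dinv = Matrix.diagonal fun i => (d i)⁻¹)
    (hP : P = Dinv * A)
    (hLβ : Lβ = D - ∑ r ∈ Finset.Icc 1 T, β r • (D * P ^ r))
    (ε : ℝ) (hε0 : 0 < ε) (hε : ε ≤ 1 / 2)
    (Lt : Matrix (Fin n) (Fin n) ℝ)
    (hsparse : ∀ x : Fin n → ℝ,
      (1 - ε) * (x ⬝ᵥ Lt.mulVec x) ≤ x ⬝ᵥ Lβ.mulVec x ∧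
      x ⬝ᵥ Lβ.mulVec x ≤ (1 + ε) * (x ⬝ᵥ Lt.mulVec x))
    (PPRtrunc PPRapprox : Matrix (Fin n) (Fin n) ℝ)
    (hPPRtrunc : PPRtrunc = ∑ r ∈ Finset.range (T + 1), (α * (1 - α) ^ r) • P ^ r)
    (hPPRapprox : PPRapprox
      = α • (1 : Matrix (Fin n) (Fin n) ℝ)
        + αsum • ((1 : Matrix (Fin n) (Fin n) ℝ) - Dinv * Lt)) :
    ∀ μ ∈ spectrum ℝ (PPRtrunc - PPRapprox), |μ| ≤ 4 * ε * αsum := by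
  intro μ hμ
  obtain rfl : Dinv = diagonal d⁻¹ := hDinv
  subst hD hP hPPRtrunc hPPRapprox
  have hd0 (i : Fin n) : d i ≠ 0 := (hdpos i).ne'
  have hd' : A *ᵥ 1 = d := funext fun i => by simp [mulVec, dotProduct, hd]
  have hcoef_pos (r : ℕ) : 0 < α * (1 - α) ^ r := mul_pos hα0 (pow_pos (sub_pos.2 hα1) r)
  have hαsum_pos : 0 < αsum := hαsum ▸ sum_pos (fun r _ => hcoef_pos r) ⟨1, by simp [hT]⟩
  have hβ0 (r : ℕ) (_ : r ∈ Icc 1 T) : 0 ≤ β r := hβ r ▸ (div_pos (hcoef_pos r) hαsum_pos).le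
  have hβ1 : ∑ r ∈ Icc 1 T, β r = 1 := by
    simp_rw [hβ]
    rw [← sum_div, ← hαsum, div_self hαsum_pos.ne']
  rw [truncPPR_sub_approxPPR (diagonal_inv_mul_diagonal hd0) hαsum_pos.ne'] at hμ
  simp only [← hβ, ← hLβ] at hμ
  obtain ⟨v, hv0, hv⟩ := exists_dotProduct_mulVec_eq_of_mem_spectrum
    (diagonal_mul_diagonal_inv hd0) hμ
  rw [sub_mulVec, dotProduct_sub] at hv
  obtain ⟨hLβ0, hLβD⟩ : v ⬝ᵥ Lβ *ᵥ v ∈ Set.Icc 0 (2 * (v ⬝ᵥ diagonal d *ᵥ v)) :=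
    hLβ ▸ dotProduct_pprLaplacian_mulVec_mem_Icc hA hAnn hd' hdpos hβ0 hβ1 v
  have happrox := abs_sub_le_of_spectral_approx hLβ0 hε0.le hε (hsparse v).1 (hsparse v).2
  have hqD : 0 < v ⬝ᵥ diagonal d *ᵥ v := by
    simpa using (posDef_diagonal_iff.2 hdpos).dotProduct_mulVec_pos hv0
  refine le_of_mul_le_mul_right ?_ hqD
  calc |μ| * (v ⬝ᵥ diagonal d *ᵥ v) = αsum * |v ⬝ᵥ Lt *ᵥ v - v ⬝ᵥ Lβ *ᵥ v| := by
        rw [← abs_of_pos hqD, ← abs_mul, ← hv, abs_mul, abs_of_pos hαsum_pos]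
    _ ≤ αsum * (2 * ε * (2 * (v ⬝ᵥ diagonal d *ᵥ v))) := by
          gcongr
          exact happrox.trans (by gcongr)
    _ = 4 * ε * αsum * (v ⬝ᵥ diagonal d *ᵥ v) := by ring

/-- If `L̃` is a symmetric PSD ε-spectral sparsifier of `L_β(G)` and
`Π̃ = αI + α_sum·(I − D⁻¹L̃)`, then every eigenvalue of `Π' − Π̃` has absolute value
at most `4ε·α_sum`, where `Π'` is the T-truncated PPR matrix. -/
theorem approx_ppr_eigenvalue_bound
    {n : ℕ} (hn : 1 ≤ n)
    (A : Matrix (Fin n) (Fin n) ℝ)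
    (hA : A.IsSymm) (hAnn : ∀ i j, 0 ≤ A i j)
    (d : Fin n → ℝ) (hd : ∀ i, d i = ∑ j, A i j) (hdpos : ∀ i, 0 < d i)
    (α : ℝ) (hα0 : 0 < α) (hα1 : α < 1)
    (T : ℕ) (hT : 1 ≤ T)
    (αsum : ℝ) (hαsum : αsum = ∑ i ∈ Finset.Icc 1 T, α * (1 - α) ^ i)
    (β : ℕ → ℝ) (hβ : ∀ r, β r = α * (1 - α) ^ r / αsum)
    (D Dinv P Lβ : Matrix (Fin n) (Fin n) ℝ)
    (hD : D = Matrix.diagonal d)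
    (hDinv : Dinv = Matrix.diagonal fun i => (d i)⁻¹)
    (hP : P = Dinv * A)
    (hLβ : Lβ = D - ∑ r ∈ Finset.Icc 1 T, β r • (D * P ^ r))
    (ε : ℝ) (hε0 : 0 < ε) (hε : ε ≤ 1 / 2)
    (Lt : Matrix (Fin n) (Fin n) ℝ) (hLtsymm : Lt.IsSymm) (hLtpsd : Lt.PosSemidef)
    (hsparse : ∀ x : Fin n → ℝ,
      (1 - ε) * (x ⬝ᵥ Lt.mulVec x) ≤ x ⬝ᵥ Lβ.mulVec x ∧
      x ⬝ᵥ Lβ.mulVec x ≤ (1 + ε) * (x ⬝ᵥ Lt.mulVec x))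
    (PPRtrunc PPRapprox : Matrix (Fin n) (Fin n) ℝ)
    (hPPRtrunc : PPRtrunc = ∑ r ∈ Finset.range (T + 1), (α * (1 - α) ^ r) • P ^ r)
    (hPPRapprox : PPRapprox
      = α • (1 : Matrix (Fin n) (Fin n) ℝ)
        + αsum • ((1 : Matrix (Fin n) (Fin n) ℝ) - Dinv * Lt)) :
    ∀ μ ∈ spectrum ℝ (PPRtrunc - PPRapprox), |μ| ≤ 4 * ε * αsum :=
  approx_ppr_eigenvalue_bound_general A hA hAnn d hd hdpos α hα0 hα1 T hT αsum hαsum β hβ D Dinv P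
    Lβ hD hDinv hP hLβ ε hε0 hε Lt hsparse PPRtrunc PPRapprox hPPRtrunc hPPRapprox
end
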